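/- arXiv:math/0605501 — 7 statements merged into one kernel-verified Lean document; each statement's English description precedes it below -/
import Mathlib

section
/- Let 0 < η < 1/4 and η³/(2−4η) < δ < (η³−3η²+η)/(4−2η), and set d = 1−2η−2δ, u = 1−2η+η², v = 1−η, c = 1−2η−3δ. If ε ∈ [0, η], x ∈ [d/v, v], and at least one of y, z lies in [d/v, v] while the other lies in [−v, v], then x' := (1−ε)x + (ε/2)(y+z) satisfies c < x' ≤ v. -/
theorem stmt_2 (η δ : ℝ) (hη0 : 0 < η) (hη1 : η < 1/4)
    (hδl : η^3 / (2 - 4*η) < δ) (hδr : δ < (η^3 - 3*η^2 + η) / (4 - 2*η))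
    (c d u v : ℝ) (hc : c = 1 - 2*η - 3*δ) (hd : d = 1 - 2*η - 2*δ)
    (hu : u = 1 - 2*η + η^2) (hv : v = 1 - η)
    (ε x y z : ℝ) (hε : ε ∈ Set.Icc 0 η)
    (hx : x ∈ Set.Icc (d/v) v)
    (hyz : (y ∈ Set.Icc (d/v) v ∧ z ∈ Set.Icc (-v) v) ∨
           (z ∈ Set.Icc (d/v) v ∧ y ∈ Set.Icc (-v) v)) :
    c < (1-ε)*x + ε/2*(y+z) ∧ (1-ε)*x + ε/2*(y+z) ≤ v := by
  obtain ⟨hε0, hε1⟩ := hε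
  obtain ⟨hx1, hx2⟩ := hx
  have hv0 : 0 < v := by rw [hv]; linarith
  have h24 : 0 < 2 - 4*η := by linarith
  have hδl' : η^3 < δ * (2 - 4*η) := by
    rw [div_lt_iff₀ h24] at hδl; linarith
  have hδ0 : 0 < δ := by nlinarith [pow_pos hη0 3]
  have hδr' : δ * (4 - 2*η) < η^3 - 3*η^2 + η := by
    rw [lt_div_iff₀ (by linarith : (0:ℝ) < 4 - 2*η)] at hδr; linarith
  have hd0 : 0 < d := by rw [hd]; nlinarith
  have hqv : (d/v) * v = d := div_mul_cancel₀ d (ne_of_gt hv0)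
  have hε1' : ε < 1 := by linarith
  -- bounds on y+z
  have hyz' : (d/v) + (-v) ≤ y + z ∧ y + z ≤ v + v := by
    rcases hyz with ⟨⟨h1, h2⟩, ⟨h3, h4⟩⟩ | ⟨⟨h1, h2⟩, ⟨h3, h4⟩⟩ <;>
      constructor <;> linarith
  obtain ⟨hs1, hs2⟩ := hyz'
  constructor
  · -- lower bound
    have key : c * v < ((1-ε) * (d/v) + ε/2 * ((d/v) + (-v))) * v := by
      have expand : ((1-ε) * (d/v) + ε/2 * ((d/v) + (-v))) * v
          = (1-ε) * d + ε/2 * d - ε/2 * v^2 := by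
        rw [show ((1-ε) * (d/v) + ε/2 * ((d/v) + (-v))) * v = (1-ε) * ((d/v)*v) + ε/2 * ((d/v)*v) - ε/2 * v^2 by ring, hqv]
      rw [expand, hc, hd, hv]
      nlinarith [mul_nonneg hε0 hδ0.le, mul_nonneg (mul_nonneg hε0 hδ0.le) hη0.le]
    have step : (1-ε) * (d/v) + ε/2 * ((d/v) + (-v)) ≤ (1-ε)*x + ε/2*(y+z) := by
      have h1 : (1-ε) * (d/v) ≤ (1-ε) * x :=
        mul_le_mul_of_nonneg_left hx1 (by linarith)
      have h2 : ε/2 * ((d/v) + (-v)) ≤ ε/2 * (y+z) :=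
        mul_le_mul_of_nonneg_left hs1 (by linarith)
      linarith
    have := lt_of_mul_lt_mul_right (by nlinarith [key] : c * v < ((1-ε)*x + ε/2*(y+z)) * v) hv0.le
    calc c = c := rfl
    _ < (1-ε)*x + ε/2*(y+z) := by
      by_contra h
      push_neg at h
      have : ((1-ε)*x + ε/2*(y+z)) * v ≤ c * v :=
        mul_le_mul_of_nonneg_right h hv0.le
      nlinarith [step, key, mul_le_mul_of_nonneg_right step hv0.le]
  · have h1 := mul_le_mul_of_nonneg_left hx2 (by linarith : (0:ℝ) ≤ 1-ε)
    have h2 := mul_le_mul_of_nonneg_left hs2 (by linarith : (0:ℝ) ≤ ε/2)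
    have h3 : (1-ε)*v + ε/2*(v+v) = v := by ring
    linarith
end

section
/- Let 0 < η < 1/4 and η³/(2−4η) < δ < (η³−3η²+η)/(4−2η), with a = 1−4η, b = 1−2η−4δ, d = 1−2η−2δ, v = 1−η. If x ∈ [d/v, v] and y, z ∈ [−v, −d/v], then x' := (1−η)x + (η/2)(y+z) satisfies a < x' < b. -/
theorem stmt_3 (η δ : ℝ) (hη0 : 0 < η) (hη1 : η < 1/4)
    (hδl : η^3 / (2 - 4*η) < δ) (hδr : δ < (η^3 - 3*η^2 + η) / (4 - 2*η))
    (a b d v : ℝ) (ha : a = 1 - 4*η) (hb : b = 1 - 2*η - 4*δ)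
    (hd : d = 1 - 2*η - 2*δ) (hv : v = 1 - η)
    (x y z : ℝ) (hx : x ∈ Set.Icc (d/v) v)
    (hy : y ∈ Set.Icc (-v) (-(d/v))) (hz : z ∈ Set.Icc (-v) (-(d/v))) :
    a < (1-η)*x + η/2*(y+z) ∧ (1-η)*x + η/2*(y+z) < b := by
  obtain ⟨hx1, hx2⟩ := hx
  obtain ⟨hy1, hy2⟩ := hy
  obtain ⟨hz1, hz2⟩ := hz
  have hv0 : 0 < v := by rw [hv]; linarith
  have hδl' : η^3 < δ * (2 - 4*η) := (div_lt_iff₀ (by linarith)).mp hδl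
  have hδr' : δ * (4 - 2*η) < η^3 - 3*η^2 + η := (lt_div_iff₀ (by linarith)).mp hδr
  have hdv : d/v * v = d := div_mul_cancel₀ d (ne_of_gt hv0)
  have h1η : (0:ℝ) < 1 - η := by linarith
  constructor
  · -- lower bound: x ≥ d/v, y,z ≥ -v
    have h1 : (1-η)*x ≥ (1-η)*(d/v) := by nlinarith
    have h2 : (1-η)*(d/v) = d := by
      rw [hv]
      field_simp
    have hδub : 2*δ < η + η^2 := by nlinarith [sq_nonneg η, hη0.le]
    nlinarith [mul_pos (half_pos hη0) h1η]
  · have h1 : (1-η)*x ≤ (1-η)*v := by nlinarith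
    have h2 : η/2*(y+z) ≤ η/2*(-(d/v) + -(d/v)) := by nlinarith
    have key : (1-η)*v + η/2*(-(d/v) + -(d/v)) < b := by
      rw [hv] at hdv ⊢
      nlinarith [hdv, h1η, mul_pos h1η h1η]
    linarith
end

section
/- Let τ̃ : [−1,1] → [−v,v] be the odd piecewise linear interpolation determined by τ̃(0)=0, τ̃(a)=−u, τ̃(b)=−c, τ̃(c)=c, τ̃(d)=v, τ̃(d')=c, τ̃(d'')=d, τ̃(u)=u, τ̃(v)=c, τ̃(1)=−v and τ̃(−x)=−τ̃(x). Then τ̃ maps the interval [c,v] into itself. -/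
/-- Affine interpolation through `(p, fp)` and `(q, fq)`. -/
noncomputable def affInterp (p q fp fq x : ℝ) : ℝ := fp + (x - p) * (fq - fp) / (q - p)

lemma affInterp_mem (p q fp fq x lo hi : ℝ) (hpq : p < q) (hx : x ∈ Set.Icc p q)
    (hlo : lo ≤ fp) (hhi : fp ≤ hi) (hlo' : lo ≤ fq) (hhi' : fq ≤ hi) :
    affInterp p q fp fq x ∈ Set.Icc lo hi := by
  obtain ⟨hx1, hx2⟩ := hx
  have hq : 0 < q - p := by linarith
  have ht0 : 0 ≤ (x - p) / (q - p) := div_nonneg (by linarith) hq.le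
  have ht1 : (x - p) / (q - p) ≤ 1 := by
    rw [div_le_one hq]; linarith
  have : affInterp p q fp fq x = fp + (x - p) / (q - p) * (fq - fp) := by
    unfold affInterp; ring
  rw [this]
  set t := (x - p) / (q - p)
  constructor <;> nlinarith

theorem stmt_8 (η δ γ : ℝ) (hη0 : 0 < η) (hη1 : η < 1/4)
    (hδl : η^3 / (2 - 4*η) < δ) (hδr : δ < (η^3 - 3*η^2 + η) / (4 - 2*η))
    (a b c d d' d'' u v : ℝ) (ha : a = 1 - 4*η) (hb : b = 1 - 2*η - 4*δ)
    (hc : c = 1 - 2*η - 3*δ) (hd : d = 1 - 2*η - 2*δ)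
    (hγ : 0 < γ) (hd' : d' = d + γ) (hd'' : d'' = d + 2*γ) (hd''u : d'' < u)
    (hu : u = 1 - 2*η + η^2) (hv : v = 1 - η)
    (τ : ℝ → ℝ)
    (hodd : ∀ x, τ (-x) = - τ x)
    (h1 : ∀ x ∈ Set.Icc (0:ℝ) a, τ x = affInterp 0 a 0 (-u) x)
    (h2 : ∀ x ∈ Set.Icc a b, τ x = affInterp a b (-u) (-c) x)
    (h3 : ∀ x ∈ Set.Icc b c, τ x = affInterp b c (-c) c x)
    (h4 : ∀ x ∈ Set.Icc c d, τ x = affInterp c d c v x)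
    (h5 : ∀ x ∈ Set.Icc d d', τ x = affInterp d d' v c x)
    (h6 : ∀ x ∈ Set.Icc d' d'', τ x = affInterp d' d'' c d x)
    (h7 : ∀ x ∈ Set.Icc d'' u, τ x = affInterp d'' u d u x)
    (h8 : ∀ x ∈ Set.Icc u v, τ x = affInterp u v u c x)
    (h9 : ∀ x ∈ Set.Icc v 1, τ x = affInterp v 1 c (-v) x) :
    Set.MapsTo τ (Set.Icc c v) (Set.Icc c v) := by
  have hδ0 : 0 < δ := lt_trans (div_pos (by positivity) (by linarith)) hδl
  have hcd : c < d := by rw [hc, hd]; linarith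
  have hdd' : d < d' := by rw [hd']; linarith
  have hd'd'' : d' < d'' := by rw [hd', hd'']; linarith
  have huv : u < v := by rw [hu, hv]; nlinarith
  have hcv : c ≤ v := by rw [hc, hv]; linarith
  have hdv : d ≤ v := by rw [hd, hv]; linarith
  have hcd'' : c ≤ d'' := by linarith
  have hcu : c ≤ u := by linarith
  intro x hx
  obtain ⟨hx1, hx2⟩ := hx
  rcases le_total x d with hxd | hxd
  · rw [h4 x ⟨hx1, hxd⟩]
    exact affInterp_mem _ _ _ _ _ _ _ hcd ⟨hx1, hxd⟩ le_rfl hcv hcv le_rfl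
  rcases le_total x d' with hxd' | hxd'
  · rw [h5 x ⟨hxd, hxd'⟩]
    exact affInterp_mem _ _ _ _ _ _ _ hdd' ⟨hxd, hxd'⟩ hcv le_rfl le_rfl hcv
  rcases le_total x d'' with hxd'' | hxd''
  · rw [h6 x ⟨hxd', hxd''⟩]
    exact affInterp_mem _ _ _ _ _ _ _ hd'd'' ⟨hxd', hxd''⟩ le_rfl hcv hcd.le hdv
  rcases le_total x u with hxu | hxu
  · rw [h7 x ⟨hxd'', hxu⟩]
    exact affInterp_mem _ _ _ _ _ _ _ hd''u ⟨hxd'', hxu⟩ hcd.le hdv hcu huv.le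
  · rw [h8 x ⟨hxu, hx2⟩]
    exact affInterp_mem _ _ _ _ _ _ _ huv ⟨hxu, hx2⟩ hcu huv.le le_rfl hcv
end

section
/- With τ̃ as above, the map τ̃ restricted to [c,v] has the Markov property with respect to the partition points c < d < d' < d'' < u < v: each of the intervals [c,d], [d,d'], [d',d''], [d'',u], [u,v] is mapped by τ̃ monotonically onto a union of intervals from this partition (specifically τ̃([c,d]) = [c,v], τ̃([d,d']) = [c,v], τ̃([d',d'']) = [c,d], τ̃([d'',u]) = [d,u], τ̃([u,v]) = [c,u]). -/
lemma key_mono (p q fp fq : ℝ) (hpq : p < q) (hf : fp < fq) (τ : ℝ → ℝ)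
    (h : ∀ x ∈ Set.Icc p q, τ x = affInterp p q fp fq x) :
    MonotoneOn τ (Set.Icc p q) ∧ τ '' Set.Icc p q = Set.Icc fp fq := by
  have hq : (0:ℝ) < q - p := by linarith
  have hfp : (0:ℝ) < fq - fp := by linarith
  constructor
  · intro x hx y hy hxy
    rw [h x hx, h y hy]
    unfold affInterp
    have : (x - p) * (fq - fp) / (q - p) ≤ (y - p) * (fq - fp) / (q - p) := by
      apply div_le_div_of_nonneg_right ?_ hq.le
      nlinarith
    linarith
  · ext t
    constructor
    · rintro ⟨x, hx, rfl⟩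
      rw [h x hx]
      unfold affInterp
      obtain ⟨h1, h2⟩ := hx
      constructor
      · have := div_nonneg (mul_nonneg (by linarith : (0:ℝ) ≤ x - p) hfp.le) hq.le
        linarith
      · have : (x - p) * (fq - fp) / (q - p) ≤ fq - fp := by
          rw [div_le_iff₀ hq]; nlinarith
        linarith
    · rintro ⟨h1, h2⟩
      refine ⟨p + (t - fp) * (q - p) / (fq - fp), ⟨?_, ?_⟩, ?_⟩
      · have := div_nonneg (mul_nonneg (by linarith : (0:ℝ) ≤ t - fp) hq.le) hfp.le
        linarith
      · have : (t - fp) * (q - p) / (fq - fp) ≤ q - p := by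
          rw [div_le_iff₀ hfp]; nlinarith
        linarith
      · rw [h _ ⟨by
            have := div_nonneg (mul_nonneg (by linarith : (0:ℝ) ≤ t - fp) hq.le) hfp.le
            linarith, by
            have : (t - fp) * (q - p) / (fq - fp) ≤ q - p := by
              rw [div_le_iff₀ hfp]; nlinarith
            linarith⟩]
        unfold affInterp
        field_simp
        ring

lemma key_anti (p q fp fq : ℝ) (hpq : p < q) (hf : fq < fp) (τ : ℝ → ℝ)
    (h : ∀ x ∈ Set.Icc p q, τ x = affInterp p q fp fq x) :
    AntitoneOn τ (Set.Icc p q) ∧ τ '' Set.Icc p q = Set.Icc fq fp := by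
  have hq : (0:ℝ) < q - p := by linarith
  have hfp : (0:ℝ) < fp - fq := by linarith
  constructor
  · intro x hx y hy hxy
    rw [h x hx, h y hy]
    unfold affInterp
    have : (y - p) * (fq - fp) / (q - p) ≤ (x - p) * (fq - fp) / (q - p) := by
      apply div_le_div_of_nonneg_right ?_ hq.le
      nlinarith
    linarith
  · ext t
    constructor
    · rintro ⟨x, hx, rfl⟩
      rw [h x hx]
      unfold affInterp
      obtain ⟨h1, h2⟩ := hx
      constructor
      · have : fq - fp ≤ (x - p) * (fq - fp) / (q - p) := by
          rw [le_div_iff₀ hq]; nlinarith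
        linarith
      · have : (x - p) * (fq - fp) / (q - p) ≤ 0 := by
          apply div_nonpos_of_nonpos_of_nonneg ?_ hq.le
          nlinarith
        linarith
    · rintro ⟨h1, h2⟩
      have hxmem : p + (fp - t) * (q - p) / (fp - fq) ∈ Set.Icc p q := by
        constructor
        · have := div_nonneg (mul_nonneg (by linarith : (0:ℝ) ≤ fp - t) hq.le) hfp.le
          linarith
        · have : (fp - t) * (q - p) / (fp - fq) ≤ q - p := by
            rw [div_le_iff₀ hfp]; nlinarith
          linarith
      refine ⟨p + (fp - t) * (q - p) / (fp - fq), hxmem, ?_⟩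
      rw [h _ hxmem]
      unfold affInterp
      field_simp
      ring

theorem stmt_9 (η δ γ : ℝ) (hη0 : 0 < η) (hη1 : η < 1/4)
    (hδl : η^3 / (2 - 4*η) < δ) (hδr : δ < (η^3 - 3*η^2 + η) / (4 - 2*η))
    (c d d' d'' u v : ℝ)
    (hc : c = 1 - 2*η - 3*δ) (hd : d = 1 - 2*η - 2*δ)
    (hγ : 0 < γ) (hd' : d' = d + γ) (hd'' : d'' = d + 2*γ) (hd''u : d'' < u)
    (hu : u = 1 - 2*η + η^2) (hv : v = 1 - η)
    (τ : ℝ → ℝ)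
    (h4 : ∀ x ∈ Set.Icc c d, τ x = affInterp c d c v x)
    (h5 : ∀ x ∈ Set.Icc d d', τ x = affInterp d d' v c x)
    (h6 : ∀ x ∈ Set.Icc d' d'', τ x = affInterp d' d'' c d x)
    (h7 : ∀ x ∈ Set.Icc d'' u, τ x = affInterp d'' u d u x)
    (h8 : ∀ x ∈ Set.Icc u v, τ x = affInterp u v u c x) :
    (MonotoneOn τ (Set.Icc c d) ∧ τ '' Set.Icc c d = Set.Icc c v) ∧
    (AntitoneOn τ (Set.Icc d d') ∧ τ '' Set.Icc d d' = Set.Icc c v) ∧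
    (MonotoneOn τ (Set.Icc d' d'') ∧ τ '' Set.Icc d' d'' = Set.Icc c d) ∧
    (MonotoneOn τ (Set.Icc d'' u) ∧ τ '' Set.Icc d'' u = Set.Icc d u) ∧
    (AntitoneOn τ (Set.Icc u v) ∧ τ '' Set.Icc u v = Set.Icc c u) := by
  have hδ0 : 0 < δ := by
    have h2 : (0:ℝ) < 2 - 4*η := by linarith
    have : 0 < η^3 / (2 - 4*η) := by positivity
    linarith
  have hcd : c < d := by rw [hc, hd]; linarith
  have hcv : c < v := by rw [hc, hv]; linarith
  have hdd' : d < d' := by rw [hd']; linarith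
  have hd'd'' : d' < d'' := by rw [hd', hd'']; linarith
  have hdu : d < u := by rw [hd, hu]; nlinarith
  have huv : u < v := by rw [hu, hv]; nlinarith
  have hcu : c < u := lt_trans hcd hdu
  exact ⟨key_mono c d c v hcd hcv τ h4,
         key_anti d d' v c hdd' hcv τ h5,
         key_mono d' d'' c d hd'd'' hcd τ h6,
         key_mono d'' u d u hd''u hdu τ h7,
         key_anti u v u c huv hcu τ h8⟩
end

section
/- Let Q ⊂ ℝ^Λ (Λ finite) be a cube of side length ℓ(Q) and let Φ_ε be the linear map (Φ_ε x)_i = (1−ε)x_i + (ε/2)(x_{i+e₁} + x_{i+e₂}) on the torus lattice Λ = (ℤ/Lℤ)². Then for ε ∈ [0, 1/4], the image Φ_ε(Q) contains a cube of side length at least (1/3)·ℓ(Q). -/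
/-- The linear nearest-neighbour coupling map on the torus lattice `(ℤ/Lℤ)²`. -/
noncomputable def couplingMap (L : ℕ) (ε : ℝ) (x : ZMod L × ZMod L → ℝ) :
    ZMod L × ZMod L → ℝ :=
  fun i => (1 - ε) * x i + ε / 2 * (x (i + (1, 0)) + x (i + (0, 1)))

/-- `couplingMap` as a linear map. -/
noncomputable def couplingLM (L : ℕ) (ε : ℝ) :
    (ZMod L × ZMod L → ℝ) →ₗ[ℝ] (ZMod L × ZMod L → ℝ) where
  toFun := couplingMap L ε
  map_add' := by
    intro x y; funext i; simp only [couplingMap, Pi.add_apply]; ring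
  map_smul' := by
    intro c x; funext i
    simp only [couplingMap, Pi.smul_apply, smul_eq_mul, RingHom.id_apply]; ring

lemma couplingLM_apply (L : ℕ) (ε : ℝ) (x : ZMod L × ZMod L → ℝ) :
    couplingLM L ε x = couplingMap L ε x := rfl

theorem stmt_16 (L : ℕ) (hL : 0 < L) (ε : ℝ) (hε : ε ∈ Set.Icc (0 : ℝ) (1/4))
    (ℓ : ℝ) (hℓ : 0 < ℓ) (a : ZMod L × ZMod L → ℝ)
    (Q : Set (ZMod L × ZMod L → ℝ))
    (hQ : Q = Set.univ.pi fun i => Set.Icc (a i) (a i + ℓ)) :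
    ∃ a' : ZMod L × ZMod L → ℝ,
      (Set.univ.pi fun i => Set.Icc (a' i) (a' i + ℓ/3)) ⊆ couplingMap L ε '' Q := by
  haveI : NeZero L := ⟨hL.ne'⟩
  obtain ⟨hε0, hε4⟩ := hε
  -- max principle
  have key : ∀ (v : ZMod L × ZMod L → ℝ) (C : ℝ),
      (∀ i, |couplingMap L ε v i| ≤ C) → ∀ j, (1 - 2*ε) * |v j| ≤ C := by
    intro v C hC j
    obtain ⟨i, hi⟩ : ∃ i : ZMod L × ZMod L, ∀ k, |v k| ≤ |v i| :=
      Finite.exists_max (fun k => |v k|)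
    have h1 : |(1 - ε) * v i| = (1 - ε) * |v i| := by
      rw [abs_mul, abs_of_nonneg (show (0:ℝ) ≤ 1 - ε by linarith)]
    have h2 : |(1 - ε) * v i| ≤ |couplingMap L ε v i|
        + |ε / 2 * (v (i + (1,0)) + v (i + (0,1)))| := by
      have heq : (1 - ε) * v i
          = couplingMap L ε v i - ε / 2 * (v (i + (1,0)) + v (i + (0,1))) := by
        simp only [couplingMap]; ring
      rw [heq]
      exact abs_sub (couplingMap L ε v i) _
    have h3 : |ε / 2 * (v (i + (1,0)) + v (i + (0,1)))| ≤ ε * |v i| := by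
      rw [abs_mul, abs_of_nonneg (show (0:ℝ) ≤ ε / 2 by linarith)]
      have habs := abs_add_le (v (i + (1,0))) (v (i + (0,1)))
      have h4 := hi (i + (1,0))
      have h5 := hi (i + (0,1))
      nlinarith
    have hCi := hC i
    have hji := hi j
    nlinarith [abs_nonneg (v j)]
  -- injective, hence surjective
  have hinj : Function.Injective (couplingLM L ε) := by
    rw [injective_iff_map_eq_zero]
    intro v hv
    funext j
    have hk := key v 0 (fun i => by
      have : couplingMap L ε v i = 0 := by
        rw [← couplingLM_apply, hv]; rfl
      rw [this]; simp) j
    have hvj := abs_nonneg (v j)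
    have : |v j| = 0 := by nlinarith
    simpa [abs_eq_zero] using this
  have hsurj : Function.Surjective (couplingLM L ε) :=
    (LinearMap.injective_iff_surjective).mp hinj
  -- the answer
  refine ⟨fun i => couplingMap L ε a i + ℓ/6, ?_⟩
  intro y hy
  rw [Set.mem_pi] at hy
  obtain ⟨u, hu⟩ := hsurj (y - couplingLM L ε a)
  have hu' : ∀ i, couplingMap L ε u i = y i - couplingMap L ε a i := by
    intro i
    rw [← couplingLM_apply, hu]
    rfl
  -- bound on u
  have hub : ∀ j, |u j - ℓ/3| ≤ ℓ/3 := by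
    have hC : ∀ i, |couplingMap L ε (fun k => u k - ℓ/3) i| ≤ ℓ/6 := by
      intro i
      have heq : couplingMap L ε (fun k => u k - ℓ/3) i
          = couplingMap L ε u i - ℓ/3 := by
        simp only [couplingMap]; ring
      rw [heq, hu' i, abs_le]
      obtain ⟨hl, hr⟩ := hy i (Set.mem_univ i)
      simp only at hl hr
      constructor <;> linarith
    intro j
    have hk := key (fun k => u k - ℓ/3) (ℓ/6) hC j
    nlinarith [abs_nonneg (u j - ℓ/3)]
  refine ⟨a + u, ?_, ?_⟩
  · rw [hQ, Set.mem_pi]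
    intro j _
    have h := abs_le.mp (hub j)
    simp only [Pi.add_apply, Set.mem_Icc]
    constructor <;> [linarith [h.1]; linarith [h.2]]
  · have heq : couplingMap L ε (a + u)
        = fun i => couplingMap L ε a i + couplingMap L ε u i := by
      funext i; simp only [couplingMap, Pi.add_apply]; ring
    rw [heq]
    funext i
    rw [hu' i]
    ring
end

section
/- Let ζ, ζ_s, ζ_σ : ℝ → ℝ be increasing functions with ζ' of bounded variation on [−1, 2p−1], and let χ be the indicator of an interval [−1,x]. Then ∫_{−1}^{2p−1} |χ(ζ_σ(y))ζ_σ'(y) − χ(ζ_s(y))ζ_s'(y)| dy ≤ 2‖ζ_σ − ζ_s‖_∞·L + ∫_{−1}^{2p−1} |ζ_σ'(y) − ζ_s'(y)| dy, where L bounds the number of sign changes; in the setting of the paper (ζ_σ, ζ_s increasing with uniformly bounded derivative) the bound 2‖ζ_σ−ζ_s‖_∞ + ∫|ζ_σ' − ζ_s'| dy holds. -/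
/-!
Write `χ(f) f' - χ(g) g' = χ(f) (f' - g') + (χ(f) - χ(g)) g'`; the first term contributes
`∫ |f' - g'|`. If `χ(f y) ≠ χ(g y)`, then `f y` and `g y` lie on opposite sides of an
endpoint `c` of `[-1, x]`. By monotonicity, for a fixed endpoint this always happens in the same
order, so `g y` stays in one interval of length `B` adjacent to `c`. Substituting `u = g y`,
the integral of `1_J(g y) g'(y)` is at most the length of `J`, which gives `B` per endpoint.
-/

open MeasureTheory Set

lemma exists_Icc_of_not_iff_of_isLowerSet {s D : Set ℝ} {f g : ℝ → ℝ} {c B : ℝ}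
    (hf : MonotoneOn f s) (hg : MonotoneOn g s) (hB : ∀ y ∈ s, |f y - g y| ≤ B)
    (hD : IsLowerSet D) (hcD : Iio c ⊆ D) (hDc : D ⊆ Iic c) :
    ∃ d, ∀ y ∈ s, ¬(f y ∈ D ↔ g y ∈ D) → g y ∈ Icc d (d + B) := by
  by_cases h : ∃ y₀ ∈ s, f y₀ ∈ D ∧ g y₀ ∉ D
  · obtain ⟨y₀, hy₀, hfy₀, hgy₀⟩ := h
    refine ⟨c, fun y hy hne => ?_⟩
    -- two disagreements of opposite kinds would contradict monotonicity
    have hfy : f y ∈ D := by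
      by_contra hfy
      have hgy : g y ∈ D := by tauto
      rcases le_total y y₀ with hyy₀ | hy₀y
      · exact hfy (hD (hf hy hy₀ hyy₀) hfy₀)
      · exact hgy₀ (hD (hg hy₀ hy hy₀y) hgy)
    have hgy : c ≤ g y := not_lt.1 fun hlt => hne ⟨fun _ => hcD hlt, fun _ => hfy⟩
    have hfg := (abs_le.1 (hB y hy)).1
    have hfc : f y ≤ c := hDc hfy
    constructor <;> linarith
  · push Not at h
    refine ⟨c - B, fun y hy hne => ?_⟩
    have hfy : f y ∉ D := fun hfy => hne ⟨fun _ => h y hy hfy, fun _ => hfy⟩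
    have hgy : g y ∈ D := by tauto
    have hfg := (abs_le.1 (hB y hy)).2
    have hgc : g y ≤ c := hDc hgy
    have hcf : c ≤ f y := not_lt.1 fun hlt => hfy (hcD hlt)
    constructor <;> linarith

lemma exists_Icc_union_of_not_iff_Icc {s : Set ℝ} {f g : ℝ → ℝ} {c₁ c₂ B : ℝ}
    (hf : MonotoneOn f s) (hg : MonotoneOn g s) (hB : ∀ y ∈ s, |f y - g y| ≤ B) :
    ∃ d₁ d₂, ∀ y ∈ s, ¬(f y ∈ Icc c₁ c₂ ↔ g y ∈ Icc c₁ c₂) →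
      g y ∈ Icc d₁ (d₁ + B) ∪ Icc d₂ (d₂ + B) := by
  obtain ⟨d₁, hd₁⟩ := exists_Icc_of_not_iff_of_isLowerSet hf hg hB (isLowerSet_Iic c₂)
    Iio_subset_Iic_self subset_rfl
  obtain ⟨d₂, hd₂⟩ := exists_Icc_of_not_iff_of_isLowerSet hf hg hB (isLowerSet_Iio c₁)
    subset_rfl Iio_subset_Iic_self
  refine ⟨d₁, d₂, fun y hy hne => ?_⟩
  by_cases h₁ : f y ∈ Iic c₂ ↔ g y ∈ Iic c₂
  · refine Or.inr (hd₂ y hy fun h₂ => hne ?_)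
    simp only [mem_Icc, mem_Iic, mem_Iio, ← not_lt] at h₁ h₂ ⊢
    tauto
  · exact Or.inl (hd₁ y hy h₁)

lemma abs_indicator_mul_sub_indicator_mul_le {α : Type*} {A J : Set α} {u v : α} {s t : ℝ}
    (ht : 0 ≤ t) (h : ¬(u ∈ A ↔ v ∈ A) → v ∈ J) :
    |A.indicator (fun _ => (1 : ℝ)) u * s - A.indicator (fun _ => (1 : ℝ)) v * t| ≤
      |s - t| + t * J.indicator (fun _ => (1 : ℝ)) v := by
  have hs : |s| ≤ |s - t| + t := by
    linarith [abs_sub_abs_le_abs_sub s t, abs_of_nonneg ht]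
  by_cases hu : u ∈ A <;> by_cases hv : v ∈ A <;> by_cases hvJ : v ∈ J <;>
    simp_all [abs_of_nonneg ht, add_nonneg]

section ChangeOfVariables

variable {g g' : ℝ → ℝ} {a b : ℝ} {J : Set ℝ}

lemma integrableOn_deriv_mul_indicator_comp (hab : a ≤ b) (hg : ContinuousOn g (Icc a b))
    (hg' : ∀ y ∈ Ioo a b, HasDerivAt g (g' y) y) (hg'0 : ∀ y ∈ Ioo a b, 0 ≤ g' y)
    (hJ : MeasurableSet J) :
    IntegrableOn (fun y => g' y * J.indicator (fun _ => (1 : ℝ)) (g y)) (Icc a b) :=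
  (integrableOn_Icc_deriv_smul_iff_of_deriv_nonneg hg hg' hg'0 hab).2
    ((integrableOn_const measure_Icc_lt_top.ne).indicator hJ)

lemma integral_deriv_mul_indicator_comp_le (hab : a ≤ b) (hg : ContinuousOn g (Icc a b))
    (hg' : ∀ y ∈ Ioo a b, HasDerivAt g (g' y) y) (hg'0 : ∀ y ∈ Ioo a b, 0 ≤ g' y)
    (hJ : MeasurableSet J) (hJfin : volume J ≠ ⊤) :
    ∫ y in Icc a b, g' y * J.indicator (fun _ => (1 : ℝ)) (g y) ≤ volume.real J := by
  have hsubst := integral_Icc_deriv_smul_of_deriv_nonneg hg hg' hg'0 hab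
    (g := J.indicator fun _ => (1 : ℝ))
  simp only [smul_eq_mul] at hsubst
  rw [hsubst, setIntegral_indicator hJ, setIntegral_const, smul_eq_mul, mul_one]
  exact measureReal_mono inter_subset_right hJfin

end ChangeOfVariables

theorem stmt_18_general (p : ℕ) (f g : ℝ → ℝ)
    (hf : ContDiff ℝ 1 f) (hg : ContDiff ℝ 1 g)
    (hfm : MonotoneOn f (Set.Icc (-1 : ℝ) (2 * p - 1)))
    (hgm : MonotoneOn g (Set.Icc (-1 : ℝ) (2 * p - 1)))
    (x B : ℝ)
    (hB : ∀ y ∈ Set.Icc (-1 : ℝ) (2 * p - 1), |f y - g y| ≤ B)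
    (χ : ℝ → ℝ) (hχ : χ = Set.indicator (Set.Icc (-1 : ℝ) x) fun _ => (1 : ℝ)) :
    ∫ y in Set.Icc (-1 : ℝ) (2 * p - 1), |χ (f y) * deriv f y - χ (g y) * deriv g y| ≤
      2 * B + ∫ y in Set.Icc (-1 : ℝ) (2 * p - 1), |deriv f y - deriv g y| := by
  have hab : (-1 : ℝ) ≤ 2 * p - 1 := by linarith [p.cast_nonneg (α := ℝ)]
  have hB0 : 0 ≤ B := (abs_nonneg _).trans (hB _ (left_mem_Icc.2 hab))
  obtain ⟨d₁, d₂, hd⟩ := exists_Icc_union_of_not_iff_Icc hfm hgm hB (c₁ := -1) (c₂ := x)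
  set J := Icc d₁ (d₁ + B) ∪ Icc d₂ (d₂ + B)
  have hJ : MeasurableSet J := measurableSet_Icc.union measurableSet_Icc
  have hvolJ : volume.real J ≤ 2 * B := by
    grw [measureReal_union_le, Real.volume_real_Icc_of_le, Real.volume_real_Icc_of_le] <;> linarith
  have hg' : ∀ y ∈ Ioo (-1 : ℝ) (2 * p - 1), HasDerivAt g (deriv g y) y :=
    fun y _ => (hg.differentiable one_ne_zero y).hasDerivAt
  have hg'0 : ∀ y ∈ Ioo (-1 : ℝ) (2 * p - 1), 0 ≤ deriv g y := fun y hy => by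
    rw [← derivWithin_of_mem_nhds (Icc_mem_nhds hy.1 hy.2)]
    exact hgm.derivWithin_nonneg
  have hpt : ∀ᵐ y ∂volume.restrict (Icc (-1 : ℝ) (2 * p - 1)),
      |χ (f y) * deriv f y - χ (g y) * deriv g y| ≤
        |deriv f y - deriv g y| + deriv g y * J.indicator (fun _ => (1 : ℝ)) (g y) := by
    rw [← Measure.restrict_congr_set Ioo_ae_eq_Icc]
    refine ae_restrict_of_forall_mem measurableSet_Ioo fun y hy => ?_
    subst hχ
    exact abs_indicator_mul_sub_indicator_mul_le (hg'0 y hy) (hd y (Ioo_subset_Icc_self hy))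
  have hint₁ : IntegrableOn (fun y => |deriv f y - deriv g y|) (Icc (-1 : ℝ) (2 * p - 1)) :=
    ((hf.continuous_deriv le_rfl).sub (hg.continuous_deriv le_rfl)).abs.integrableOn_Icc
  have hint₂ := integrableOn_deriv_mul_indicator_comp hab hg.continuous.continuousOn hg' hg'0 hJ
  calc ∫ y in Icc (-1 : ℝ) (2 * p - 1), |χ (f y) * deriv f y - χ (g y) * deriv g y|
      ≤ ∫ y in Icc (-1 : ℝ) (2 * p - 1),
          (|deriv f y - deriv g y| + deriv g y * J.indicator (fun _ => (1 : ℝ)) (g y)) :=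
        integral_mono_of_nonneg (.of_forall fun _ => abs_nonneg _) (hint₁.add hint₂) hpt
    _ = (∫ y in Icc (-1 : ℝ) (2 * p - 1), |deriv f y - deriv g y|) +
          ∫ y in Icc (-1 : ℝ) (2 * p - 1), deriv g y * J.indicator (fun _ => (1 : ℝ)) (g y) :=
        integral_add hint₁ hint₂
    _ ≤ 2 * B + ∫ y in Icc (-1 : ℝ) (2 * p - 1), |deriv f y - deriv g y| := by
        have hchange := integral_deriv_mul_indicator_comp_le hab hg.continuous.continuousOn hg'
          hg'0 hJ (measure_union_lt_top measure_Icc_lt_top measure_Icc_lt_top).ne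
        linarith

theorem stmt_18 (p : ℕ) (hp : 0 < p) (f g : ℝ → ℝ)
    (hf : ContDiff ℝ 1 f) (hg : ContDiff ℝ 1 g)
    (hfm : MonotoneOn f (Set.Icc (-1 : ℝ) (2 * p - 1)))
    (hgm : MonotoneOn g (Set.Icc (-1 : ℝ) (2 * p - 1)))
    (x B : ℝ)
    (hB : ∀ y ∈ Set.Icc (-1 : ℝ) (2 * p - 1), |f y - g y| ≤ B)
    (χ : ℝ → ℝ) (hχ : χ = Set.indicator (Set.Icc (-1 : ℝ) x) fun _ => (1 : ℝ)) :
    ∫ y in Set.Icc (-1 : ℝ) (2 * p - 1), |χ (f y) * deriv f y - χ (g y) * deriv g y| ≤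
      2 * B + ∫ y in Set.Icc (-1 : ℝ) (2 * p - 1), |deriv f y - deriv g y| :=
  stmt_18_general p f g hf hg hfm hgm x B hB χ hχ
end

section
/- Let τ̂ : [−1,1] → [−1,1] be a piecewise monotone map such that for every maximal monotonicity interval J, the third image τ̂³(J) equals [−1,1], and suppose |τ̂'| ≥ 4 on each branch. Then for every interval J₀ of positive length there exists n with τ̂ⁿ(J₀) = [−1,1]; consequently τ̂ is topologically mixing. -/
/-!
On a subinterval of a single branch the mean value theorem stretches lengths by `|τ'| ≥ 4`
(up to shrinking away from the endpoints, where `τ` need not be differentiable). An interval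
`J` that contains no whole branch meets at most two branches, so one of its two pieces has at
least half the length of `J`, and `τ(J)` contains an interval of length `≥ (3/2)|J|`. Since
lengths stay bounded by `2`, after finitely many steps an iterate of `J` contains a whole
branch `B`, and three more steps cover `[-1,1]`. As `τ([-1,1]) ⊇ τ³(B) = [-1,1]`, all later
iterates cover `[-1,1]` as well, which gives mixing.
-/

open Set Function

section Expansion

variable {τ : ℝ → ℝ} {L u v : ℝ}

theorem mul_sub_le_abs_sub_of_le_abs_deriv (huv : u < v) (hc : ContinuousOn τ (Icc u v))
    (hd : DifferentiableOn ℝ τ (Ioo u v)) (hL : ∀ x ∈ Ioo u v, L ≤ |deriv τ x|) :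
    L * (v - u) ≤ |τ v - τ u| := by
  obtain ⟨c, hc, hslope⟩ := exists_deriv_eq_slope τ huv hc hd
  have hvu : 0 < v - u := sub_pos.2 huv
  calc L * (v - u) ≤ |deriv τ c| * (v - u) := mul_le_mul_of_nonneg_right (hL c hc) hvu.le
    _ = |τ v - τ u| := by rw [hslope, abs_div, abs_of_pos hvu, div_mul_cancel₀ _ hvu.ne']

theorem exists_Icc_subset_image_of_le_abs_deriv (hd : DifferentiableOn ℝ τ (Ioo u v))
    (hL : ∀ x ∈ Ioo u v, L ≤ |deriv τ x|) {s : ℝ} (hs0 : 0 < s) (hs : s < v - u) :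
    ∃ x' y', L * s ≤ y' - x' ∧ Icc x' y' ⊆ τ '' Icc u v := by
  set u' := u + (v - u - s) / 2 with hu'
  have hsub : Icc u' (u' + s) ⊆ Ioo u v := Icc_subset_Ioo (by linarith) (by linarith)
  have hcont : ContinuousOn τ (Icc u' (u' + s)) := hd.continuousOn.mono hsub
  have hlen := mul_sub_le_abs_sub_of_le_abs_deriv (by linarith) hcont
    (hd.mono (Ioo_subset_Icc_self.trans hsub)) fun x hx => hL x (hsub (Ioo_subset_Icc_self hx))
  refine ⟨min (τ u') (τ (u' + s)), max (τ u') (τ (u' + s)), ?_, ?_⟩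
  · simpa only [max_sub_min_eq_abs, add_sub_cancel_left] using hlen
  · rw [← uIcc_of_le (by linarith : u' ≤ u' + s)] at hcont
    exact (intermediate_value_uIcc hcont).trans
      (image_mono ((uIcc_of_le (by linarith)).trans_subset (hsub.trans Ioo_subset_Icc_self)))

end Expansion

theorem exists_Icc_subset_or_exists_half_subset_Icc {b : ℕ → ℝ} {p : ℕ} {x y : ℝ}
    (hxy : x < y) (hx : b 0 ≤ x) (hy : y ≤ b p) :
    (∃ i < p, Icc (b i) (b (i + 1)) ⊆ Icc x y) ∨
      ∃ i < p, ∃ u v, u < v ∧ y - x ≤ 2 * (v - u) ∧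
        Icc u v ⊆ Icc x y ∧ Icc u v ⊆ Icc (b i) (b (i + 1)) := by
  obtain ⟨i, hi⟩ : ∃ i, Nat.findGreatest (fun i => b i ≤ x) p = i := ⟨_, rfl⟩
  have hix : b i ≤ x := hi ▸ Nat.findGreatest_spec (P := fun i => b i ≤ x) (Nat.zero_le p) hx
  have hip : i < p := (hi ▸ Nat.findGreatest_le (P := fun i => b i ≤ x) p).lt_of_ne <| by
    rintro rfl; linarith
  have hx1 : x < b (i + 1) :=
    lt_of_not_ge (Nat.findGreatest_is_greatest (P := fun i => b i ≤ x) (by omega) hip)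
  rcases le_or_gt y (b (i + 1)) with hy1 | hy1
  · exact Or.inr ⟨i, hip, x, y, hxy, by linarith, le_rfl, Icc_subset_Icc hix hy1⟩
  have hi2 : i + 1 < p := by
    by_contra h
    rw [show p = i + 1 by omega] at hy
    linarith
  rcases le_or_gt y (b (i + 2)) with hy2 | hy2
  · rcases le_total (y - x) (2 * (b (i + 1) - x)) with h | h
    · exact Or.inr ⟨i, hip, x, b (i + 1), hx1, h, Icc_subset_Icc le_rfl hy1.le,
        Icc_subset_Icc hix le_rfl⟩
    · exact Or.inr ⟨i + 1, hi2, b (i + 1), y, hy1, by linarith, Icc_subset_Icc hx1.le le_rfl,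
        Icc_subset_Icc le_rfl hy2⟩
  · exact Or.inl ⟨i + 1, hi2, Icc_subset_Icc hx1.le hy2.le⟩

theorem exists_branch_subset_or_exists_Icc_subset_image {τ : ℝ → ℝ} {p : ℕ}
    {a : Fin (p + 1) → ℝ} {L c : ℝ} (hc : 0 < c) (hcL : 2 * c < L)
    (hd : ∀ k : Fin p, DifferentiableOn ℝ τ (Ioo (a k.castSucc) (a k.succ)))
    (hL : ∀ k : Fin p, ∀ x ∈ Ioo (a k.castSucc) (a k.succ), L ≤ |deriv τ x|)
    {x y : ℝ} (hxy : x < y) (hx : a 0 ≤ x) (hy : y ≤ a (Fin.last p)) :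
    (∃ k : Fin p, Icc (a k.castSucc) (a k.succ) ⊆ Icc x y) ∨
      ∃ x' y', c * (y - x) ≤ y' - x' ∧ Icc x' y' ⊆ τ '' Icc x y := by
  set b : ℕ → ℝ := fun i => a (Fin.clamp i p)
  have hbk : ∀ k : Fin p, b k = a k.castSucc ∧ b (k + 1) = a k.succ := fun k =>
    ⟨congrArg a (Fin.ext (min_eq_left k.isLt.le)), congrArg a (Fin.ext (min_eq_left k.isLt))⟩
  rcases exists_Icc_subset_or_exists_half_subset_Icc (b := b) (p := p) hxy hx
      (by simpa [b, Fin.clamp_eq_last p p le_rfl] using hy) with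
    ⟨i, hi, hsub⟩ | ⟨i, hi, u, v, huv, hlen, hsub, hbranch⟩
  · obtain ⟨h0, h1⟩ := hbk ⟨i, hi⟩
    exact Or.inl ⟨⟨i, hi⟩, by rwa [← h0, ← h1]⟩
  · obtain ⟨h0, h1⟩ := hbk ⟨i, hi⟩
    have hIoo : Ioo u v ⊆ Ioo (a (Fin.castSucc ⟨i, hi⟩)) (a (Fin.succ ⟨i, hi⟩)) := by
      rw [← h0, ← h1]
      exact Ioo_subset_Ioo (hbranch (left_mem_Icc.2 huv.le)).1
        (hbranch (right_mem_Icc.2 huv.le)).2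
    have hL0 : 0 < L := by linarith
    obtain ⟨x', y', hlen', hsub'⟩ := exists_Icc_subset_image_of_le_abs_deriv
      ((hd _).mono hIoo) (fun z hz => hL _ z (hIoo hz)) (s := 2 * c / L * (v - u))
      (by have := sub_pos.2 huv; positivity)
      (by nlinarith [(div_lt_one hL0).2 hcL, sub_pos.2 huv])
    refine Or.inr ⟨x', y', ?_, hsub'.trans (image_mono hsub)⟩
    calc c * (y - x) ≤ c * (2 * (v - u)) := mul_le_mul_of_nonneg_left hlen hc.le
      _ = L * (2 * c / L * (v - u)) := by field_simp
      _ ≤ y' - x' := hlen'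

theorem exists_iterate_image_superset_of_expanding {τ : ℝ → ℝ} {ι : Type*} {B : ι → Set ℝ}
    {α β c : ℝ} (hc : 1 < c) (hmaps : MapsTo τ (Icc α β) (Icc α β))
    (hgrow : ∀ x y, x < y → α ≤ x → y ≤ β → (∃ k, B k ⊆ Icc x y) ∨
      ∃ x' y', c * (y - x) ≤ y' - x' ∧ Icc x' y' ⊆ τ '' Icc x y)
    {x y : ℝ} (hxy : x < y) (hx : α ≤ x) (hy : y ≤ β) :
    ∃ n k, B k ⊆ τ^[n] '' Icc x y := by
  suffices h : ∀ N : ℕ, ∀ x y, x < y → α ≤ x → y ≤ β → β - α < c ^ N * (y - x) →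
      ∃ n k, B k ⊆ τ^[n] '' Icc x y by
    obtain ⟨N, hN⟩ := pow_unbounded_of_one_lt ((β - α) / (y - x)) hc
    exact h N x y hxy hx hy (by rwa [div_lt_iff₀ (sub_pos.2 hxy)] at hN)
  intro N
  induction N with
  | zero => intro x y _ hx hy hlen; simp only [pow_zero, one_mul] at hlen; linarith
  | succ N ih =>
    intro x y hxy hx hy hlen
    rcases hgrow x y hxy hx hy with ⟨k, hk⟩ | ⟨x', y', hlen', hsub⟩
    · exact ⟨0, k, by simpa using hk⟩
    have hxy' : x' < y' := by nlinarith [sub_pos.2 hxy]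
    have hαβ : Icc x' y' ⊆ Icc α β :=
      hsub.trans ((image_mono (Icc_subset_Icc hx hy)).trans hmaps.image_subset)
    obtain ⟨hx', hy'⟩ := (Icc_subset_Icc_iff hxy'.le).1 hαβ
    have hlen'' : β - α < c ^ N * (y' - x') := by
      calc β - α < c ^ N * (c * (y - x)) := by rw [← mul_assoc, ← pow_succ]; exact hlen
        _ ≤ c ^ N * (y' - x') := mul_le_mul_of_nonneg_left hlen' (by positivity)
    obtain ⟨n, k, hk⟩ := ih x' y' hxy' hx' hy' hlen''
    refine ⟨n + 1, k, hk.trans ?_⟩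
    rw [iterate_succ, image_comp]
    exact image_mono hsub

section Iterates

variable {X : Type*} {f : X → X} {I B : Set X}

theorem surjOn_of_iterate_image_eq (hmaps : MapsTo f I I) (hB : B ⊆ I) {r : ℕ}
    (hr : f^[r + 1] '' B = I) : SurjOn f I I := by
  show I ⊆ f '' I
  calc I = f '' (f^[r] '' B) := by rw [← image_comp, ← iterate_succ', hr]
    _ ⊆ f '' I := image_mono ((image_mono hB).trans (hmaps.iterate r).image_subset)

theorem iterate_image_eq_of_subset_iterate_image (hmaps : MapsTo f I I) (hsurj : SurjOn f I I)
    {J : Set X} (hJ : J ⊆ I) {n r : ℕ} (hBJ : B ⊆ f^[n] '' J) (hB : f^[r] '' B = I) {m : ℕ}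
    (hm : n + r ≤ m) : f^[m] '' J = I := by
  refine ((image_mono hJ).trans (hmaps.iterate m).image_subset).antisymm ?_
  obtain ⟨q, rfl⟩ := Nat.exists_eq_add_of_le' hm
  rw [show q + (n + r) = q + r + n by omega, iterate_add, iterate_add, image_comp, image_comp]
  calc I = f^[q] '' I := ((hsurj.iterate q).image_eq_of_mapsTo (hmaps.iterate q)).symm
    _ ⊆ f^[q] '' (f^[r] '' (f^[n] '' J)) := image_mono (hB ▸ image_mono hBJ)

end Iterates

theorem exists_Icc_subset_of_isOpen {U : Set ℝ} (hU : IsOpen U) {α β : ℝ} (hαβ : α < β)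
    (hne : (U ∩ Icc α β).Nonempty) : ∃ x y, α ≤ x ∧ x < y ∧ y ≤ β ∧ Icc x y ⊆ U := by
  obtain ⟨u, huU, huI⟩ := hne
  rw [← closure_Ioo hαβ.ne, mem_closure_iff] at huI
  obtain ⟨w, hwU, hwI⟩ := huI U hU huU
  obtain ⟨ε, hε, hball⟩ := Metric.isOpen_iff.1 (hU.inter isOpen_Ioo) w ⟨hwU, hwI⟩
  have hIcc : Icc (w - ε / 2) (w + ε / 2) ⊆ U ∩ Ioo α β := by
    rw [← Real.closedBall_eq_Icc]
    exact (Metric.closedBall_subset_ball (half_lt_self hε)).trans hball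
  refine ⟨w - ε / 2, w + ε / 2, ?_, by linarith, ?_, fun z hz => (hIcc hz).1⟩
  · exact (hIcc (left_mem_Icc.2 (by linarith))).2.1.le
  · exact (hIcc (right_mem_Icc.2 (by linarith))).2.2.le

theorem exists_forall_iterate_image_inter_nonempty {τ : ℝ → ℝ} {α β : ℝ} (hαβ : α < β)
    (hfull : ∀ x y, α ≤ x → x < y → y ≤ β → ∃ N, ∀ n ≥ N, τ^[n] '' Icc x y = Icc α β)
    {U V : Set ℝ} (hU : IsOpen U) (hUne : (U ∩ Icc α β).Nonempty)
    (hVne : (V ∩ Icc α β).Nonempty) :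
    ∃ N, ∀ n ≥ N, (τ^[n] '' (U ∩ Icc α β) ∩ V).Nonempty := by
  obtain ⟨x, y, hx, hxy, hy, hU'⟩ := exists_Icc_subset_of_isOpen hU hαβ hUne
  obtain ⟨N, hN⟩ := hfull x y hx hxy hy
  obtain ⟨v, hvV, hvI⟩ := hVne
  refine ⟨N, fun n hn => ⟨v, image_mono (subset_inter hU' (Icc_subset_Icc hx hy)) ?_, hvV⟩⟩
  rwa [hN n hn]

theorem stmt_19_general (τ : ℝ → ℝ) (p : ℕ)
    (a : Fin (p + 1) → ℝ) (ha : StrictMono a) (ha0 : a 0 = -1) (hap : a (Fin.last p) = 1)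
    (hmaps : Set.MapsTo τ (Set.Icc (-1 : ℝ) 1) (Set.Icc (-1 : ℝ) 1))
    -- `τ` is piecewise C¹ with `|τ'| ≥ 4` on each branch
    (hC1 : ∀ k : Fin p, ContDiffOn ℝ 1 τ (Set.Ioo (a k.castSucc) (a k.succ)))
    (hexp : ∀ k : Fin p, ∀ x ∈ Set.Ioo (a k.castSucc) (a k.succ), 4 ≤ |deriv τ x|)
    -- the third image of each maximal monotonicity interval is all of `[-1,1]`
    (hfull : ∀ k : Fin p, τ^[3] '' Set.Icc (a k.castSucc) (a k.succ) = Set.Icc (-1 : ℝ) 1) :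
    (∀ x y : ℝ, -1 ≤ x → x < y → y ≤ 1 →
      ∃ n : ℕ, τ^[n] '' Set.Icc x y = Set.Icc (-1 : ℝ) 1) ∧
    (∀ U V : Set ℝ, IsOpen U → IsOpen V →
      (U ∩ Set.Icc (-1 : ℝ) 1).Nonempty → (V ∩ Set.Icc (-1 : ℝ) 1).Nonempty →
      ∃ N : ℕ, ∀ n ≥ N, (τ^[n] '' (U ∩ Set.Icc (-1 : ℝ) 1) ∩ V).Nonempty) := by
  have hbranch (k : Fin p) : Icc (a k.castSucc) (a k.succ) ⊆ Icc (-1) 1 :=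
    Icc_subset_Icc (ha0 ▸ ha.monotone (Fin.zero_le _)) (hap ▸ ha.monotone (Fin.le_last _))
  have hgrow (x y : ℝ) (hxy : x < y) (hx : -1 ≤ x) (hy : y ≤ 1) :=
    exists_branch_subset_or_exists_Icc_subset_image (c := 3 / 2) (by norm_num)
      (by norm_num) (fun k => (hC1 k).differentiableOn_one) hexp hxy (ha0 ▸ hx) (hap ▸ hy)
  have heventually (x y : ℝ) (hx : -1 ≤ x) (hxy : x < y) (hy : y ≤ 1) :
      ∃ N, ∀ n ≥ N, τ^[n] '' Icc x y = Icc (-1) 1 := by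
    obtain ⟨n, k, hk⟩ :=
      exists_iterate_image_superset_of_expanding (by norm_num) hmaps hgrow hxy hx hy
    exact ⟨n + 3, fun m hm => iterate_image_eq_of_subset_iterate_image hmaps
      (surjOn_of_iterate_image_eq hmaps (hbranch k) (hfull k)) (Icc_subset_Icc hx hy) hk
      (hfull k) hm⟩
  exact ⟨fun x y hx hxy hy => (heventually x y hx hxy hy).imp fun N hN => hN N le_rfl,
    fun U V hU _ => exists_forall_iterate_image_inter_nonempty (by norm_num) heventually hU⟩

theorem stmt_19 (τ : ℝ → ℝ) (p : ℕ) (hp : 0 < p)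
    (a : Fin (p + 1) → ℝ) (ha : StrictMono a) (ha0 : a 0 = -1) (hap : a (Fin.last p) = 1)
    (hmaps : Set.MapsTo τ (Set.Icc (-1 : ℝ) 1) (Set.Icc (-1 : ℝ) 1))
    -- `τ` is monotone on each maximal monotonicity interval
    (hmono : ∀ k : Fin p, StrictMonoOn τ (Set.Icc (a k.castSucc) (a k.succ)) ∨
      StrictAntiOn τ (Set.Icc (a k.castSucc) (a k.succ)))
    -- `τ` is piecewise C¹ with `|τ'| ≥ 4` on each branch
    (hC1 : ∀ k : Fin p, ContDiffOn ℝ 1 τ (Set.Ioo (a k.castSucc) (a k.succ)))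
    (hexp : ∀ k : Fin p, ∀ x ∈ Set.Ioo (a k.castSucc) (a k.succ), 4 ≤ |deriv τ x|)
    -- the third image of each maximal monotonicity interval is all of `[-1,1]`
    (hfull : ∀ k : Fin p, τ^[3] '' Set.Icc (a k.castSucc) (a k.succ) = Set.Icc (-1 : ℝ) 1) :
    (∀ x y : ℝ, -1 ≤ x → x < y → y ≤ 1 →
      ∃ n : ℕ, τ^[n] '' Set.Icc x y = Set.Icc (-1 : ℝ) 1) ∧
    (∀ U V : Set ℝ, IsOpen U → IsOpen V →
      (U ∩ Set.Icc (-1 : ℝ) 1).Nonempty → (V ∩ Set.Icc (-1 : ℝ) 1).Nonempty →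
      ∃ N : ℕ, ∀ n ≥ N, (τ^[n] '' (U ∩ Set.Icc (-1 : ℝ) 1) ∩ V).Nonempty) :=
  stmt_19_general τ p a ha ha0 hap hmaps hC1 hexp hfull
end
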